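/- arXiv:1608.00109 — 6 statements merged into one kernel-verified Lean document; each statement's English description precedes it below -/
import Mathlib

section
/- Let n ≥ 1, let R ⊆ [n]×[n] and let C_k(i,j) ∈ ℤ be given for all i,j,k ∈ [n], with not all of C_1(i,j),…,C_n(i,j) zero for each (i,j) ∈ R. If the associated linear system L(R,{C_k(i,j)}) is not partition regular, then the exponential system E(R,{C_k(i,j)}) is not partition regular: there exists a finite colouring f : ℕ → X admitting no X_1,…,X_n,Y_1,…,Y_n ∈ ℕ, all > 1 and all of the same colour under f, with (X_i : ℝ)^(∏_{k=1}^n (Y_k : ℝ)^{C_k(i,j)}) = X_j for every (i,j) ∈ R. -/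
/-!
Taking `log ∘ log` turns `X_i ^ (∏ₖ Y_k ^ C_k(i,j)) = X_j` into the additive relation
`log log X_j = log log X_i + ∑ₖ C_k(i,j) log Y_k`. Given a colouring `g` of `ℕ` without monochromatic
solutions of the linear system, colour `m` by the fractional part of `log m` up to `1/K` and, for
every `N ≤ M`, by the fractional part of `N log log m` up to `1/K` and by `g (round (N log m))`.
In a monochromatic solution all `log Y_k` have nearly the same fractional part, so Dirichlet's
approximation theorem yields one `N ≤ M` making every `N log Y_k` nearly an integer `z_k`. Then
`κ_i = ⌊N log log X_i⌋` satisfies `κ_j - κ_i = ∑ₖ C_k(i,j) z_k` up to an integer error of absolute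
value `< 1`, i.e. exactly, and `z` is a `g`-monochromatic solution of the linear system.
-/

open Finset

def IsLinSolution (n : ℕ) (R : Set (Fin n × Fin n)) (C : Fin n → Fin n → Fin n → ℤ)
    (z : Fin n → ℕ) : Prop :=
  (∀ i, 0 < z i) ∧
    ∃ κ : Fin n → ℤ, ∀ i j, (i, j) ∈ R →
      κ j - κ i = ∑ m, C m i j * (z m : ℤ)

def LinPartitionRegular (n : ℕ) (R : Set (Fin n × Fin n))
    (C : Fin n → Fin n → Fin n → ℤ) : Prop :=
  ∀ (X : Type) [Finite X] (f : ℕ → X),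
    ∃ z : Fin n → ℕ, IsLinSolution n R C z ∧ ∃ c : X, ∀ i, f (z i) = c

open Real

section FractBucket

variable (K : ℕ) [NeZero K]

noncomputable def fractBucket (x : ℝ) : Fin K :=
  ⟨⌊(K : ℝ) * Int.fract x⌋₊, (Nat.floor_lt (by positivity)).2 <| by
    simpa using mul_lt_mul_of_pos_left (Int.fract_lt_one x)
      (Nat.cast_pos.2 (Nat.pos_of_neZero K) : (0 : ℝ) < K)⟩

variable {K}

lemma fractBucket_div_le_fract (x : ℝ) : (fractBucket K x : ℝ) / K ≤ Int.fract x := by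
  rw [div_le_iff₀' (Nat.cast_pos.2 (Nat.pos_of_neZero K))]
  exact Nat.floor_le (by positivity)

lemma fract_sub_fractBucket_div_lt (x : ℝ) : Int.fract x - (fractBucket K x : ℝ) / K < 1 / K := by
  have hK : (0 : ℝ) < K := Nat.cast_pos.2 (Nat.pos_of_neZero K)
  have := Nat.lt_floor_add_one ((K : ℝ) * Int.fract x)
  rw [sub_lt_iff_lt_add, ← add_div, lt_div_iff₀' hK]
  simpa [fractBucket, add_comm] using this

lemma abs_fract_sub_fract_lt_of_fractBucket_eq {a b : ℝ} (h : fractBucket K a = fractBucket K b) :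
    |Int.fract a - Int.fract b| < 1 / K := by
  have ha := fractBucket_div_le_fract (K := K) a
  have hb := fractBucket_div_le_fract (K := K) b
  have ha' := fract_sub_fractBucket_div_lt (K := K) a
  have hb' := fract_sub_fractBucket_div_lt (K := K) b
  rw [h] at ha ha'
  rw [abs_sub_lt_iff]
  constructor <;> linarith

end FractBucket

lemma abs_mul_sub_round_le_of_abs_fract_sub_le {ξ t δ ε : ℝ} {N : ℕ}
    (hξ : |N * ξ - round (N * ξ)| ≤ δ) (ht : |Int.fract t - ξ| ≤ ε) :
    |N * t - round (N * t)| ≤ δ + N * ε := by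
  have hN : (0 : ℝ) ≤ N := N.cast_nonneg
  calc |N * t - round (N * t)| ≤ |N * t - ((N * ⌊t⌋ + round (N * ξ) : ℤ) : ℝ)| := round_le _ _
    _ = |(N * ξ - round (N * ξ)) + N * (Int.fract t - ξ)| := by
        rw [Int.fract]; push_cast; ring_nf
    _ ≤ δ + N * ε := by
        refine (abs_add_le _ _).trans (add_le_add hξ ?_)
        rw [abs_mul, abs_of_nonneg hN]
        exact mul_le_mul_of_nonneg_left ht hN

lemma one_le_round_of_half_le {t : ℝ} (ht : 1 / 2 ≤ t) : 1 ≤ round t := by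
  rw [round_eq, Int.le_floor]
  push_cast
  linarith

lemma floor_sub_floor_eq_sum_of_abs_lt {ι : Type*} [Fintype ι] {a b : ℝ} {c z : ι → ℤ}
    {t : ι → ℝ} (hab : b = a + ∑ m, c m * t m)
    (hlt : |Int.fract a - Int.fract b| + ∑ m, |(c m : ℝ)| * |t m - z m| < 1) :
    ⌊b⌋ - ⌊a⌋ = ∑ m, c m * z m := by
  rw [← sub_eq_zero, ← Int.abs_lt_one_iff, ← Int.cast_lt (R := ℝ), Int.cast_abs, Int.cast_one]
  have hD : ((⌊b⌋ - ⌊a⌋ - ∑ m, c m * z m : ℤ) : ℝ) =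
      (Int.fract a - Int.fract b) + ∑ m, (c m : ℝ) * (t m - z m) := by
    simp only [Int.fract, mul_sub, Finset.sum_sub_distrib, hab]
    push_cast
    ring
  calc |((⌊b⌋ - ⌊a⌋ - ∑ m, c m * z m : ℤ) : ℝ)|
      ≤ |Int.fract a - Int.fract b| + ∑ m, |(c m : ℝ)| * |t m - z m| := by
        rw [hD]
        refine (abs_add_le _ _).trans (add_le_add le_rfl ?_)
        exact (Finset.abs_sum_le_sum_abs _ _).trans_eq (by simp only [abs_mul])
    _ < 1 := hlt

lemma log_log_rpow_prod_zpow {ι : Type*} [Fintype ι] {x : ℝ} (hx : 1 < x) {y : ι → ℝ}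
    (hy : ∀ k, 0 < y k) (c : ι → ℤ) :
    log (log (x ^ ∏ k, y k ^ c k)) = log (log x) + ∑ k, c k * log (y k) := by
  have hprod : 0 < ∏ k, y k ^ c k := Finset.prod_pos fun k _ => zpow_pos (hy k) _
  rw [log_rpow (by linarith), log_mul hprod.ne' (log_pos hx).ne',
    log_prod fun k _ => (zpow_pos (hy k) _).ne']
  simp only [log_zpow]
  ring

lemma exists_nat_one_div_add_mul_lt_one {B : ℝ} (hB : 0 ≤ B) :
    ∃ K M : ℕ, 0 < K ∧ 0 < M ∧ 1 / K + B * (1 / (M + 1) + M / K) < 1 := by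
  obtain ⟨M, hM⟩ := exists_nat_gt (2 * B)
  obtain ⟨K, hK⟩ := exists_nat_gt (2 * (1 + B * M))
  have hM0 : (0 : ℝ) < M := by linarith
  have hK0 : (0 : ℝ) < K := by nlinarith
  refine ⟨K, M, Nat.cast_pos.1 hK0, Nat.cast_pos.1 hM0, ?_⟩
  have h1 : B * (1 / (M + 1)) < 1 / 2 := by
    rw [mul_one_div, div_lt_iff₀ (by positivity)]; linarith
  have h2 : 1 / K + B * (M / K) < 1 / 2 := by
    rw [mul_div_assoc', ← add_div, div_lt_iff₀ hK0]; linarith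
  linarith

variable {n : ℕ} {R : Set (Fin n × Fin n)} {C : Fin n → Fin n → Fin n → ℤ}

lemma isLinSolution_round_of_near {a t : Fin n → ℝ} {ε δ B : ℝ}
    (hat : ∀ i j, (i, j) ∈ R → a j = a i + ∑ m, C m i j * t m) (ht : ∀ m, 1 / 2 ≤ t m)
    (hfract : ∀ i j, |Int.fract (a i) - Int.fract (a j)| < ε)
    (hround : ∀ m, |t m - round (t m)| ≤ δ) (hB : ∀ i j, ∑ m, |(C m i j : ℝ)| ≤ B)
    (hεδ : ε + B * δ ≤ 1) :
    IsLinSolution n R C fun m => (round (t m)).toNat := by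
  have hz m : ((round (t m)).toNat : ℤ) = round (t m) :=
    Int.toNat_of_nonneg (zero_le_one.trans (one_le_round_of_half_le (ht m)))
  refine ⟨fun m => Int.lt_toNat.2 (one_le_round_of_half_le (ht m)), fun i => ⌊a i⌋,
    fun i j hij => ?_⟩
  simp only [hz]
  refine floor_sub_floor_eq_sum_of_abs_lt (hat i j hij) ?_
  have hδ : 0 ≤ δ := (abs_nonneg _).trans (hround i)
  calc |Int.fract (a i) - Int.fract (a j)| + ∑ m, |(C m i j : ℝ)| * |t m - round (t m)|
      < ε + ∑ m, |(C m i j : ℝ)| * δ :=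
        add_lt_add_of_lt_of_le (hfract i j)
          (Finset.sum_le_sum fun m _ => mul_le_mul_of_nonneg_left (hround m) (abs_nonneg _))
    _ ≤ ε + B * δ := by rw [← Finset.sum_mul]; gcongr; exact hB i j
    _ ≤ 1 := hεδ

noncomputable def expColouring {α : Type*} (g : ℕ → α) (K M : ℕ) [NeZero K] (m : ℕ) :
    Fin K × (Fin (M + 1) → Fin K × α) :=
  (fractBucket K (log m),
    fun N => (fractBucket K (N * log (log m)), g (round (N * log m)).toNat))

lemma exists_linSolution_of_expColouring_solution {α : Type*} {g : ℕ → α} {K M : ℕ} [NeZero K]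
    {B : ℝ} (hB : ∀ i j, ∑ m, |(C m i j : ℝ)| ≤ B) (hM : 0 < M)
    (hKM : 1 / K + B * (1 / (M + 1) + M / K) < 1) {x y : Fin n → ℕ} (hx : ∀ i, 1 < x i)
    (hy : ∀ i, 1 < y i) {c : Fin K × (Fin (M + 1) → Fin K × α)}
    (hcx : ∀ i, expColouring g K M (x i) = c) (hcy : ∀ i, expColouring g K M (y i) = c)
    (hxy : ∀ i j, (i, j) ∈ R → (x i : ℝ) ^ (∏ k, (y k : ℝ) ^ (C k i j)) = x j) :
    ∃ z, IsLinSolution n R C z ∧ ∃ c, ∀ i, g (z i) = c := by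
  obtain ⟨N, hN, hNM, hNξ⟩ := Real.exists_nat_abs_mul_sub_round_le ((c.1 : ℝ) / K) hM
  have hNM' : N < M + 1 := Nat.lt_succ_of_le hNM
  have hlogy m : log 2 ≤ log (y m) := log_le_log two_pos (by exact_mod_cast hy m)
  have hfract_y m : |Int.fract (log (y m)) - (c.1 : ℝ) / K| ≤ 1 / K := by
    have hc : fractBucket K (log (y m)) = c.1 := congrArg Prod.fst (hcy m)
    have hle := fractBucket_div_le_fract (K := K) (log (y m))
    have hlt := fract_sub_fractBucket_div_lt (K := K) (log (y m))
    rw [hc] at hle hlt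
    rw [abs_le]
    constructor <;> linarith
  refine ⟨_, isLinSolution_round_of_near (a := fun i => N * log (log (x i)))
    (t := fun m => N * log (y m)) (ε := 1 / K) (δ := 1 / (M + 1) + M / K) ?_ ?_ ?_ ?_ hB ?_,
    (c.2 ⟨N, hNM'⟩).2, fun m => ?_⟩
  · intro i j hij
    rw [← hxy i j hij, log_log_rpow_prod_zpow (by exact_mod_cast hx i)
      (fun k => Nat.cast_pos.2 (zero_lt_one.trans (hy k))) (C · i j)]
    simp only [mul_add, Finset.mul_sum]
    ring_nf
  · intro m
    have h2 := log_two_gt_d9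
    have hN1 : (1 : ℝ) ≤ N := by exact_mod_cast hN
    nlinarith [hlogy m]
  · intro i j
    refine abs_fract_sub_fract_lt_of_fractBucket_eq ?_
    exact (congrArg (fun d => (d.2 ⟨N, hNM'⟩).1) (hcx i)).trans
      (congrArg (fun d => (d.2 ⟨N, hNM'⟩).1) (hcx j)).symm
  · intro m
    refine (abs_mul_sub_round_le_of_abs_fract_sub_le hNξ (hfract_y m)).trans ?_
    rw [mul_one_div]
    gcongr
  · linarith
  · exact congrArg (fun d => (d.2 ⟨N, hNM'⟩).2) (hcy m)

theorem exp_system_not_partition_regular_of_not_lin_general (n : ℕ)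
    (R : Set (Fin n × Fin n)) (C : Fin n → Fin n → Fin n → ℤ)
    (hL : ¬ LinPartitionRegular n R C) :
    ∃ (X : Type) (_ : Finite X) (f : ℕ → X),
      ¬ ∃ x y : Fin n → ℕ, (∀ i, 1 < x i) ∧ (∀ i, 1 < y i) ∧
        (∃ c : X, (∀ i, f (x i) = c) ∧ (∀ i, f (y i) = c)) ∧
        ∀ i j, (i, j) ∈ R →
          (x i : ℝ) ^ (∏ k, (y k : ℝ) ^ (C k i j)) = (x j : ℝ) := by
  by_contra! hE
  refine hL fun X _ g => ?_
  set B : ℝ := ∑ i, ∑ j, ∑ m, |(C m i j : ℝ)|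
  have hB i j : ∑ m, |(C m i j : ℝ)| ≤ B :=
    (Finset.single_le_sum (f := fun j => ∑ m, |(C m i j : ℝ)|) (fun _ _ => by positivity)
      (Finset.mem_univ j)).trans
    (Finset.single_le_sum (f := fun i => ∑ j, ∑ m, |(C m i j : ℝ)|) (fun _ _ => by positivity)
      (Finset.mem_univ i))
  obtain ⟨K, M, hK, hM, hKM⟩ := exists_nat_one_div_add_mul_lt_one (B := B) (by positivity)
  have : NeZero K := ⟨hK.ne'⟩
  obtain ⟨x, y, hx, hy, ⟨c, hcx, hcy⟩, hxy⟩ := hE _ inferInstance (expColouring g K M)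
  exact exists_linSolution_of_expColouring_solution hB hM hKM hx hy hcx hcy hxy

/-- If the associated linear system is not partition regular, then neither is the
exponential system: some finite colouring admits no monochromatic solution of
`X_i ^ (Y_1 ^ C_1(i,j) ⋯ Y_n ^ C_n(i,j)) = X_j`, `(i,j) ∈ R`, with all variables `> 1`. -/
theorem exp_system_not_partition_regular_of_not_lin (n : ℕ) (hn : 1 ≤ n)
    (R : Set (Fin n × Fin n)) (C : Fin n → Fin n → Fin n → ℤ)
    (hC : ∀ i j, (i, j) ∈ R → ∃ k, C k i j ≠ 0)
    (hL : ¬ LinPartitionRegular n R C) :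
    ∃ (X : Type) (_ : Finite X) (f : ℕ → X),
      ¬ ∃ x y : Fin n → ℕ, (∀ i, 1 < x i) ∧ (∀ i, 1 < y i) ∧
        (∃ c : X, (∀ i, f (x i) = c) ∧ (∀ i, f (y i) = c)) ∧
        ∀ i j, (i, j) ∈ R →
          (x i : ℝ) ^ (∏ k, (y k : ℝ) ^ (C k i j)) = (x j : ℝ) :=
  exp_system_not_partition_regular_of_not_lin_general n R C hL
end

section
/- Let n, k, r ≥ 1, let W : ℕ^n → ℕ be a function, let A ⊆ ℕ^n be partition regular, and let f : ℕ → [k] be a colouring admitting no monochromatic exponential A-pattern with weight W (i.e. there are no a, b > 1 and (x_1,…,x_n) ∈ A such that a, b^{x_1},…,b^{x_n}, a^{b^1},…,a^{b^{W(x_1,…,x_n)}} all have the same colour under f). Then there exist pairwise distinct colours c_1,…,c_r ∈ [k] and colourings f̃_1,…,f̃_r : ℕ → [k] such that: (1) for each i ∈ [r] there is a sequence of positive integers (d_i(m))_{m∈ℕ} with f_{d_i(m)} → f̃_i as m → ∞, where f_d : ℕ → [k] is the restricted colouring f_d(x) = f(2^{d·2^x}); and (2) the sequence of colours c_1,…,c_r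 is large with respect to f̃_1,…,f̃_r. -/
/-- A collection `A` of `n`-tuples of positive integers is partition regular if every
finite colouring of `ℕ` admits a monochromatic tuple from `A`. -/
def PartitionRegular (n : ℕ) (A : Set (Fin n → ℕ)) : Prop :=
  ∀ (X : Type) [Finite X] (f : ℕ → X),
    ∃ x ∈ A, ∃ c : X, ∀ i, f (x i) = c

/-- The colouring `f` restricted to the `d`-sequence `{2^{d·2^x}}_x`. -/
def RestrictedColouring {k : ℕ} (f : ℕ → Fin k) (d : ℕ) : ℕ → Fin k :=
  fun x => f (2 ^ (d * 2 ^ x))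

/-- A sequence of `k`-colourings `g_m` converges to `g` if for every `m₀` there is `M`
such that `g_m` agrees with `g` on `[m₀]` for all `m ≥ M`. -/
def ConvergesTo {k : ℕ} (g : ℕ → ℕ → Fin k) (g' : ℕ → Fin k) : Prop :=
  ∀ m₀ : ℕ, ∃ M : ℕ, ∀ m ≥ M, ∀ x ≤ m₀, g m x = g' x

/-- Colours `c_1,…,c_r` are large with respect to colourings `F_1,…,F_r` if for every `M`
there is an arithmetic progression of length `M` (with positive common difference) on
which each `F_i` is constantly `c_i`. -/
def IsLarge {k : ℕ} {r : ℕ} (c : Fin r → Fin k) (F : Fin r → ℕ → Fin k) : Prop :=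
  ∀ M : ℕ, ∃ a d : ℕ, 1 ≤ d ∧ ∀ i : Fin r, ∀ t < M, F i (a + d * t) = c i

/-! Induction on `r`. Let the colours `c_j` be large for restricted limits `G_j`, and let `Δ` be
the common difference of a long progression on which every `G_j` is `c_j`. Partition regularity,
applied to `y ↦ (f(2^{Δ·2^w·y}))_{w<B}`, gives `x ∈ A`, and a limit `g` of the restrictions
`f_{Δ·x_{i₀}}` is again a restricted limit of `f`. If `g(w) = c_j`, then `b = 2^{Δ·2^w}` has
`f(b^{x_i}) = c_j` for all `i`, and since `G_j` is `c_j` along `V + Δ·2^w·l`, a restriction `f_d`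
close to `G_j` gives `a = 2^{d·2^V}` with `f(a) = f(a^{b^l}) = c_j`: a monochromatic pattern.
So `g` avoids every `c_j`, and van der Waerden's theorem inside the progressions yields a colour,
necessarily new, that is large for `g` jointly with the `G_j`. -/

open Filter

theorem exists_strictMono_eventually_forall_le_eq {κ : Type*} [Finite κ] (g : ℕ → ℕ → κ) :
    ∃ (φ : ℕ → ℕ) (F : ℕ → κ), StrictMono φ ∧
      ∀ m₀, ∀ᶠ m in atTop, ∀ x ≤ m₀, g (φ m) x = F x := by
  let _ : TopologicalSpace κ := ⊥
  have : DiscreteTopology κ := ⟨rfl⟩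
  obtain ⟨F, φ, hφ, hlim⟩ := CompactSpace.tendsto_subseq g
  refine ⟨φ, F, hφ, fun m₀ => (Set.finite_Iic m₀).eventually_all.2 fun x _ => ?_⟩
  simpa [nhds_discrete, tendsto_pure] using tendsto_pi_nhds.1 hlim x

theorem PartitionRegular.exists_frequently_forall_eq {n : ℕ} {A : Set (Fin n → ℕ)}
    (hPR : PartitionRegular n A) {X : Type} [Finite X] (φ : ℕ → ℕ → X) :
    ∃ x ∈ A, ∃ᶠ ρ in atTop, ∀ i j, φ ρ (x i) = φ ρ (x j) := by
  obtain ⟨s, ψ, hs, hψ⟩ := exists_strictMono_eventually_forall_le_eq φ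
  obtain ⟨x, hx, c, hxc⟩ := hPR X ψ
  have hle : ∀ i, x i ≤ ∑ i, x i := fun i => Finset.single_le_sum (by simp) (Finset.mem_univ i)
  refine ⟨x, hx, hs.tendsto_atTop.frequently (Eventually.frequently ?_)⟩
  filter_upwards [hψ (∑ i, x i)] with m hm i j
  rw [hm _ (hle i), hm _ (hle j), hxc, hxc]

/-- Finitary van der Waerden, by compactness: a limit of counterexamples would contradict
`Combinatorics.exists_mono_homothetic_copy`. -/
theorem exists_bound_forall_exists_mono_ap (κ : Type*) [Finite κ] (M : ℕ) :
    ∃ N, ∀ C : ℕ → κ, ∃ a d, 0 < d ∧ ∃ c, ∀ t < M, a + d * t < N ∧ C (a + d * t) = c := by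
  by_contra! hbad
  choose C hC using hbad
  obtain ⟨s, F, hs, hF⟩ := exists_strictMono_eventually_forall_le_eq C
  obtain ⟨d, hd, a, c, hc⟩ := Combinatorics.exists_mono_homothetic_copy (Finset.range M) F
  obtain ⟨m, hm, hmM⟩ := ((hF (a + d * M)).and (eventually_ge_atTop (a + d * M + 1))).exists
  obtain ⟨t, ht, hC⟩ := hC (s m) a d hd c
  have hdt : a + d * t ≤ a + d * M := by gcongr
  apply hC (by have := hs.le_apply (x := m); omega)
  rw [hm _ hdt, ← hc t (Finset.mem_range.2 ht), smul_eq_mul, add_comm]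

theorem IsLarge.exists_cons {k r : ℕ} {c : Fin r → Fin k} {G : Fin r → ℕ → Fin k}
    (hc : IsLarge c G) (g : ℕ → Fin k) : ∃ c₀, IsLarge (Fin.cons c₀ c) (Fin.cons g G) := by
  have hlong : ∀ M, ∃ (cM : Fin k) (a d : ℕ), 1 ≤ d ∧ (∀ t < M, g (a + d * t) = cM) ∧
      ∀ i, ∀ t < M, G i (a + d * t) = c i := by
    intro M
    obtain ⟨N, hN⟩ := exists_bound_forall_exists_mono_ap (Fin k) M
    obtain ⟨a, d, hd, hG⟩ := hc N
    obtain ⟨a', d', hd', cM, hmono⟩ := hN fun t => g (a + d * t)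
    have hsub : ∀ t, a + d * a' + d * d' * t = a + d * (a' + d' * t) := fun t => by ring
    refine ⟨cM, a + d * a', d * d', Nat.mul_pos hd hd', fun t ht => ?_, fun i t ht => ?_⟩
    · rw [hsub]
      exact (hmono t ht).2
    · rw [hsub]
      exact hG i _ (hmono t ht).1
  choose cM a d hd hg hG using hlong
  obtain ⟨c₀, hc₀⟩ := Finite.exists_infinite_fiber cM
  have hfreq : ∃ᶠ M in atTop, cM M = c₀ :=
    Nat.frequently_atTop_iff_infinite.2 (Set.infinite_coe_iff.1 hc₀)
  refine ⟨c₀, fun M => ?_⟩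
  obtain ⟨M', hMM', hM'⟩ := hfreq.forall_exists_of_atTop M
  refine ⟨a M', d M', hd M', Fin.cases ?_ ?_⟩
  · intro t ht
    simpa [hM'] using hg M' t (ht.trans_le hMM')
  · intro i t ht
    simpa using hG M' i t (ht.trans_le hMM')

section Restrictions

variable {k : ℕ} (f : ℕ → Fin k)

def IsRestrictedLimit (F : ℕ → Fin k) : Prop :=
  ∃ d : ℕ → ℕ, (∀ m, 1 ≤ d m) ∧ ConvergesTo (fun m => RestrictedColouring f (d m)) F

theorem exists_isRestrictedLimit_frequently_eq {e : ℕ → ℕ} (he : ∀ B, 1 ≤ e B) :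
    ∃ F, IsRestrictedLimit f F ∧ ∀ w, ∃ᶠ B in atTop, RestrictedColouring f (e B) w = F w := by
  obtain ⟨φ, F, hφ, hF⟩ :=
    exists_strictMono_eventually_forall_le_eq fun B => RestrictedColouring f (e B)
  refine ⟨F, ⟨e ∘ φ, fun m => he _, fun m₀ => eventually_atTop.1 (hF m₀)⟩, fun w => ?_⟩
  exact hφ.tendsto_atTop.frequently ((hF w).mono fun m hm => hm w le_rfl).frequently

def HasMonoExpPattern {n : ℕ} (W : (Fin n → ℕ) → ℕ) (A : Set (Fin n → ℕ)) : Prop :=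
  ∃ a b : ℕ, 1 < a ∧ 1 < b ∧ ∃ x ∈ A, ∃ c : Fin k,
    f a = c ∧ (∀ i, f (b ^ x i) = c) ∧ ∀ l, 1 ≤ l → l ≤ W x → f (a ^ b ^ l) = c

variable {f}

theorem IsRestrictedLimit.hasMonoExpPattern {n : ℕ} {W : (Fin n → ℕ) → ℕ}
    {A : Set (Fin n → ℕ)} {G : ℕ → Fin k} (hG : IsRestrictedLimit f G) {x : Fin n → ℕ}
    (hx : x ∈ A) {c : Fin k} {V D : ℕ} (hD : 1 ≤ D) (hAP : ∀ l ≤ W x, G (V + D * l) = c)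
    (hpow : ∀ i, f (2 ^ (D * x i)) = c) : HasMonoExpPattern f W A := by
  obtain ⟨d, hd, hconv⟩ := hG
  obtain ⟨M, hM⟩ := hconv (V + D * W x)
  have htower : ∀ l ≤ W x, f ((2 ^ (d M * 2 ^ V)) ^ (2 ^ D) ^ l) = c := by
    intro l hl
    have hexp : (2 ^ (d M * 2 ^ V)) ^ (2 ^ D) ^ l = 2 ^ (d M * 2 ^ (V + D * l)) := by
      rw [← pow_mul, ← pow_mul, pow_add, ← mul_assoc]
    rw [hexp, ← hAP l hl]
    exact hM M le_rfl _ (by gcongr)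
  refine ⟨2 ^ (d M * 2 ^ V), 2 ^ D, Nat.one_lt_two_pow (by have := hd M; positivity),
    Nat.one_lt_two_pow (by omega), x, hx, c, by simpa using htower 0 (Nat.zero_le _),
    fun i => by rw [← pow_mul, hpow], fun l _ hl => htower l hl⟩

end Restrictions

section PatternFree

variable {n k : ℕ} {W : (Fin n → ℕ) → ℕ} {A : Set (Fin n → ℕ)} {f : ℕ → Fin k}

theorem exists_isRestrictedLimit_forall_ne (hn : 1 ≤ n) (hA : ∀ x ∈ A, ∀ i, 0 < x i)
    (hPR : PartitionRegular n A) (hf : ¬ HasMonoExpPattern f W A) {r : ℕ}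
    {c : Fin r → Fin k} {G : Fin r → ℕ → Fin k} (hG : ∀ j, IsRestrictedLimit f (G j))
    (hc : IsLarge c G) : ∃ g, IsRestrictedLimit f g ∧ ∀ w j, g w ≠ c j := by
  choose V Δ hΔ hVΔ using hc
  -- `ρ ≥ 2^B (W x + 1)` keeps all `V ρ + Δ ρ·2^w·l` (`w < B`, `l ≤ W x`) in the progression.
  have hsample : ∀ B, ∃ x ∈ A, ∃ ρ, 2 ^ B * (W x + 1) ≤ ρ ∧
      ∀ i j, ∀ w < B, f (2 ^ (Δ ρ * 2 ^ w * x i)) = f (2 ^ (Δ ρ * 2 ^ w * x j)) := by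
    intro B
    obtain ⟨x, hx, hfreq⟩ := hPR.exists_frequently_forall_eq
      fun ρ y (w : Fin B) => f (2 ^ (Δ ρ * 2 ^ (w : ℕ) * y))
    obtain ⟨ρ, hρ, hmono⟩ := hfreq.forall_exists_of_atTop (2 ^ B * (W x + 1))
    exact ⟨x, hx, ρ, hρ, fun i j w hw => congrFun (hmono i j) ⟨w, hw⟩⟩
  choose x hx ρ hρ hmono using hsample
  let i₀ : Fin n := ⟨0, hn⟩
  obtain ⟨g, hg, hfreq⟩ := exists_isRestrictedLimit_frequently_eq f
    (e := fun B => Δ (ρ B) * x B i₀) fun B => Nat.mul_pos (hΔ _) (hA _ (hx B) i₀)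
  refine ⟨g, hg, fun w j hwj => hf ?_⟩
  obtain ⟨B, hwB, hB⟩ := (hfreq w).forall_exists_of_atTop (w + 1)
  refine (hG j).hasMonoExpPattern (hx B) (c := c j) (V := V (ρ B)) (D := Δ (ρ B) * 2 ^ w)
    (Nat.mul_pos (hΔ _) (by positivity)) (fun l hl => ?_) (fun i => ?_)
  · rw [mul_assoc]
    refine hVΔ (ρ B) j _ (lt_of_lt_of_le ?_ (hρ B))
    calc 2 ^ w * l ≤ 2 ^ B * W (x B) := by gcongr <;> omega
      _ < 2 ^ B * (W (x B) + 1) := by gcongr; omega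
  · rw [hmono B i i₀ w hwB, ← hwj, ← hB, RestrictedColouring, mul_right_comm]

theorem exists_injective_isLarge_of_not_hasMonoExpPattern (hn : 1 ≤ n)
    (hA : ∀ x ∈ A, ∀ i, 0 < x i) (hPR : PartitionRegular n A) (hf : ¬ HasMonoExpPattern f W A)
    (r : ℕ) : ∃ (c : Fin r → Fin k) (F : Fin r → ℕ → Fin k),
      Function.Injective c ∧ (∀ i, IsRestrictedLimit f (F i)) ∧ IsLarge c F := by
  induction r with
  | zero => exact ⟨Fin.elim0, Fin.elim0, Function.injective_of_subsingleton _, fun i => i.elim0,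
      fun _ => ⟨0, 1, le_rfl, fun i => i.elim0⟩⟩
  | succ r ih =>
    obtain ⟨c, F, hc, hF, hlarge⟩ := ih
    obtain ⟨g, hg, hgc⟩ := exists_isRestrictedLimit_forall_ne hn hA hPR hf hF hlarge
    obtain ⟨c₀, hc₀⟩ := hlarge.exists_cons g
    refine ⟨Fin.cons c₀ c, Fin.cons g F, Fin.cons_injective_iff.2 ⟨?_, hc⟩, Fin.cases hg hF, hc₀⟩
    rintro ⟨j, rfl⟩
    obtain ⟨a, _, -, hcons⟩ := hc₀ 1
    exact hgc _ j (by simpa using hcons 0 0 one_pos)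

end PatternFree

theorem main_lemma_general (n k r : ℕ) (hn : 1 ≤ n)
    (W : (Fin n → ℕ) → ℕ) (A : Set (Fin n → ℕ))
    (hA : ∀ x ∈ A, ∀ i, 0 < x i)
    (hPR : PartitionRegular n A)
    (f : ℕ → Fin k)
    (hf : ¬ ∃ a b : ℕ, 1 < a ∧ 1 < b ∧ ∃ x ∈ A, ∃ c : Fin k,
      f a = c ∧ (∀ i, f (b ^ x i) = c) ∧
      ∀ l, 1 ≤ l → l ≤ W x → f (a ^ b ^ l) = c) :
    ∃ (c : Fin r → Fin k) (F : Fin r → ℕ → Fin k),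
      Function.Injective c ∧
      (∀ i : Fin r, ∃ d : ℕ → ℕ, (∀ m, 1 ≤ d m) ∧
        ConvergesTo (fun m => RestrictedColouring f (d m)) (F i)) ∧
      IsLarge c F :=
  exists_injective_isLarge_of_not_hasMonoExpPattern hn hA hPR hf r

/-- **Main lemma.** If `f : ℕ → [k]` admits no monochromatic exponential `A`-pattern
with weight `W`, then for every `r` there are pairwise distinct colours `c_1,…,c_r`
and `idealized' colourings `f̃_1,…,f̃_r`, each a limit of restrictions of `f` to
`d`-sequences, such that `c_1,…,c_r` is large with respect to `f̃_1,…,f̃_r`. -/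
theorem main_lemma (n k r : ℕ) (hn : 1 ≤ n) (hk : 1 ≤ k) (hr : 1 ≤ r)
    (W : (Fin n → ℕ) → ℕ) (A : Set (Fin n → ℕ))
    (hA : ∀ x ∈ A, ∀ i, 0 < x i)
    (hPR : PartitionRegular n A)
    (f : ℕ → Fin k)
    (hf : ¬ ∃ a b : ℕ, 1 < a ∧ 1 < b ∧ ∃ x ∈ A, ∃ c : Fin k,
      f a = c ∧ (∀ i, f (b ^ x i) = c) ∧
      ∀ l, 1 ≤ l → l ≤ W x → f (a ^ b ^ l) = c) :
    ∃ (c : Fin r → Fin k) (F : Fin r → ℕ → Fin k),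
      Function.Injective c ∧
      (∀ i : Fin r, ∃ d : ℕ → ℕ, (∀ m, 1 ≤ d m) ∧
        ConvergesTo (fun m => RestrictedColouring f (d m)) (F i)) ∧
      IsLarge c F :=
  main_lemma_general n k r hn W A hA hPR f hf
end

section
/- For every k ≥ 1 and every colouring f : ℕ → [k] there exists a colour c ∈ [k] that is large with respect to f; that is, for every M ∈ ℕ there exist a ∈ ℕ and d ≥ 1 such that f(a + d·t) = c for all 0 ≤ t < M. -/
/-!
Van der Waerden's theorem gives, for every length `M`, a monochromatic arithmetic progression of
length `M`, but its colour may depend on `M`. As there are finitely many colours, one of them serves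
infinitely many lengths, and a progression of length `M'` contains one of every length `M ≤ M'`.
-/

theorem exists_mono_arithProg {κ : Type*} [Finite κ] (f : ℕ → κ) (M : ℕ) :
    ∃ c : κ, ∃ a d : ℕ, 1 ≤ d ∧ ∀ t < M, f (a + d * t) = c := by
  obtain ⟨d, hd, a, c, hc⟩ := Combinatorics.exists_mono_homothetic_copy (Finset.range M) f
  refine ⟨c, a, d, hd, fun t ht => ?_⟩
  simpa only [smul_eq_mul, add_comm] using hc t (Finset.mem_range.2 ht)

theorem Finite.exists_forall_of_forall_exists_antitone {κ : Type*} [Finite κ] {P : κ → ℕ → Prop}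
    (hP : ∀ c, Antitone (P c)) (h : ∀ n, ∃ c, P c n) : ∃ c, ∀ n, P c n := by
  choose g hg using h
  obtain ⟨c, hc⟩ := Finite.exists_infinite_fiber g
  refine ⟨c, fun n => ?_⟩
  obtain ⟨m, hmc, hnm⟩ := (Set.infinite_coe_iff.mp hc).exists_gt n
  exact hP c hnm.le (hmc ▸ hg m)

theorem exists_large_colour_general (k : ℕ) (f : ℕ → Fin k) :
    ∃ c : Fin k, ∀ M : ℕ, ∃ a d : ℕ, 1 ≤ d ∧ ∀ t < M, f (a + d * t) = c :=
  Finite.exists_forall_of_forall_exists_antitone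
    (fun _ _ _ hMN ⟨a, d, hd, hc⟩ => ⟨a, d, hd, fun t ht => hc t (ht.trans_le hMN)⟩)
    (exists_mono_arithProg f)

/-- For every colouring `f : ℕ → [k]` there is a colour `c` that is large with respect to
`f`: for every `M` there is an arithmetic progression of length `M` (with positive
common difference) on which `f` is constantly `c`. -/
theorem exists_large_colour (k : ℕ) (hk : 1 ≤ k) (f : ℕ → Fin k) :
    ∃ c : Fin k, ∀ M : ℕ, ∃ a d : ℕ, 1 ≤ d ∧ ∀ t < M, f (a + d * t) = c :=
  exists_large_colour_general k f
end

section
/- Let n ≥ 1, let R ⊆ [n]×[n] and let C_k(i,j) ∈ ℤ be given for all i,j,k ∈ [n], with not all of C_1(i,j),…,C_n(i,j) zero for each (i,j) ∈ R. Let c : ℕ → X be a finite colouring admitting no monochromatic solution of the associated linear system L(R,{C_k(i,j)}): there are no positive integers z_1,…,z_n with c(z_1) = ⋯ = c(z_n) and a potential κ : [n] → ℤ satisfying κ(j) − κ(i) = ∑_{m=1}^n C_m(i,j)·z_m for all (i,j) ∈ R. Define f : ℕ → X by f(x) = c(Ω(x)) for x ≥ 2 (and arbitrarily on 0 and 1),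 where Ω(x) denotes the number of prime factors of x counted with multiplicity. Then f admits no monochromatic solution of the exponential system E(R,{C_k(i,j)}): there are no naturals X_1,…,X_n,Y_1,…,Y_n, all > 1, all of the same colour under f, with (X_i : ℝ)^(∏_{k=1}^n (Y_k : ℝ)^{C_k(i,j)}) = X_j for every (i,j) ∈ R. -/
/-!
Write `∏ₖ y_k ^ C_k(i,j) = A / B` with `A, B` the products over the positive and negative
exponents. Then `x_i ^ A = x_j ^ B`, so `A · Ω(x_i) = B · Ω(x_j)`, and applying `Ω` once more
turns this into the linear relation `Ω(Ω x_j) - Ω(Ω x_i) = ∑ₖ C_k(i,j) · Ω(y_k)`. Hence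
`z_k = Ω(y_k)` with potential `κ(i) = Ω(Ω(x_i))` solves the linear system, and it is
monochromatic for `c` because `f(y_k) = c(Ω(y_k))`.
-/

open scoped ArithmeticFunction.Omega

namespace ArithmeticFunction

theorem cardFactors_finset_prod {ι : Type*} {s : Finset ι} {g : ι → ℕ}
    (h0 : ∏ k ∈ s, g k ≠ 0) : Ω (∏ k ∈ s, g k) = ∑ k ∈ s, Ω (g k) := by
  rw [Finset.prod_eq_multiset_prod] at h0 ⊢
  rw [cardFactors_multiset_prod h0, Multiset.map_map]
  rfl

theorem cardFactors_add_cardFactors_cardFactors_eq_of_pow_eq_pow {a b A B : ℕ}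
    (ha : 1 < a) (hb : 1 < b) (hA : A ≠ 0) (hB : B ≠ 0) (h : a ^ A = b ^ B) :
    Ω A + Ω (Ω a) = Ω B + Ω (Ω b) := by
  have hΩ : A * Ω a = B * Ω b := by
    simpa only [cardFactors_pow] using congrArg Ω h
  have := congrArg Ω hΩ
  rwa [cardFactors_mul hA (cardFactors_pos_iff_one_lt.2 ha).ne',
    cardFactors_mul hB (cardFactors_pos_iff_one_lt.2 hb).ne'] at this

end ArithmeticFunction

open ArithmeticFunction

theorem pow_eq_pow_of_rpow_div_eq {a b A B : ℕ} (hB : B ≠ 0)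
    (h : (a : ℝ) ^ ((A : ℝ) / B) = b) : a ^ A = b ^ B := by
  have : (a : ℝ) ^ A = (b : ℝ) ^ B := by
    rw [← h, ← Real.rpow_natCast, ← Real.rpow_natCast, ← Real.rpow_mul (Nat.cast_nonneg a),
      div_mul_cancel₀ _ (Nat.cast_ne_zero.2 hB)]
  exact_mod_cast this

section IntegerExponents

variable {ι : Type*} [Fintype ι] {y : ι → ℕ}

theorem prod_pow_ne_zero (hy : ∀ k, y k ≠ 0) (g : ι → ℕ) : ∏ k, y k ^ g k ≠ 0 :=
  Finset.prod_ne_zero_iff.2 fun k _ => pow_ne_zero _ (hy k)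

theorem prod_zpow_eq_prod_pow_toNat_div (hy : ∀ k, y k ≠ 0) (e : ι → ℤ) :
    ∏ k, (y k : ℝ) ^ e k =
      ((∏ k, y k ^ (e k).toNat : ℕ) : ℝ) / (∏ k, y k ^ (-e k).toNat : ℕ) := by
  push_cast
  rw [← Finset.prod_div_distrib]
  refine Finset.prod_congr rfl fun k _ => ?_
  rw [← zpow_natCast, ← zpow_natCast, ← zpow_sub₀ (Nat.cast_ne_zero.2 (hy k)),
    Int.toNat_sub_toNat_neg]

theorem cardFactors_prod_pow_toNat_sub_cardFactors_prod_pow_neg_toNat (hy : ∀ k, y k ≠ 0)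
    (e : ι → ℤ) :
    (Ω (∏ k, y k ^ (e k).toNat) : ℤ) - Ω (∏ k, y k ^ (-e k).toNat) = ∑ k, e k * Ω (y k) := by
  simp only [cardFactors_finset_prod (prod_pow_ne_zero hy _), cardFactors_pow]
  push_cast
  rw [← Finset.sum_sub_distrib]
  refine Finset.sum_congr rfl fun k _ => ?_
  rw [← sub_mul, Int.toNat_sub_toNat_neg]

theorem cardFactors_cardFactors_sub_eq_sum_of_rpow_prod_zpow_eq {a b : ℕ}
    (ha : 1 < a) (hb : 1 < b) (hy : ∀ k, y k ≠ 0) (e : ι → ℤ)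
    (h : (a : ℝ) ^ ∏ k, (y k : ℝ) ^ e k = b) :
    (Ω (Ω b) : ℤ) - Ω (Ω a) = ∑ k, e k * Ω (y k) := by
  rw [prod_zpow_eq_prod_pow_toNat_div hy] at h
  have hΩΩ := cardFactors_add_cardFactors_cardFactors_eq_of_pow_eq_pow ha hb
    (prod_pow_ne_zero hy _) (prod_pow_ne_zero hy _)
    (pow_eq_pow_of_rpow_div_eq (prod_pow_ne_zero hy _) h)
  rw [← cardFactors_prod_pow_toNat_sub_cardFactors_prod_pow_neg_toNat hy]
  omega

end IntegerExponents

theorem no_mono_exp_solution_of_no_mono_lin_solution_general (n : ℕ)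
    (R : Set (Fin n × Fin n)) (C : Fin n → Fin n → Fin n → ℤ)
    (X : Type) (c : ℕ → X)
    (hc : ¬ ∃ z : Fin n → ℕ, (∀ i, 0 < z i) ∧ (∃ col : X, ∀ i, c (z i) = col) ∧
      ∃ κ : Fin n → ℤ, ∀ i j, (i, j) ∈ R →
        κ j - κ i = ∑ m, C m i j * (z m : ℤ))
    (f : ℕ → X)
    (hf : ∀ x, 2 ≤ x → f x = c (ArithmeticFunction.cardFactors x)) :
    ¬ ∃ x y : Fin n → ℕ, (∀ i, 1 < x i) ∧ (∀ i, 1 < y i) ∧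
      (∃ col : X, (∀ i, f (x i) = col) ∧ (∀ i, f (y i) = col)) ∧
      ∀ i j, (i, j) ∈ R →
        (x i : ℝ) ^ (∏ k, (y k : ℝ) ^ (C k i j)) = (x j : ℝ) := by
  rintro ⟨x, y, hx, hy, ⟨col, -, hyc⟩, hE⟩
  refine hc ⟨fun m => Ω (y m), fun m => cardFactors_pos_iff_one_lt.2 (hy m),
    ⟨col, fun m => by rw [← hf _ (hy m), hyc]⟩, fun i => Ω (Ω (x i)), fun i j hij => ?_⟩
  exact cardFactors_cardFactors_sub_eq_sum_of_rpow_prod_zpow_eq (hx i) (hx j)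
    (fun k => (zero_lt_one.trans (hy k)).ne') _ (hE i j hij)

/-- If `c` is a finite colouring admitting no monochromatic solution of the associated
linear system `L(R, {C_k(i,j)})` (in positive integers, witnessed by a potential `κ`),
then the colouring `f(x) = c(Ω(x))` (for `x ≥ 2`, arbitrary on `0` and `1`), where `Ω`
counts prime factors with multiplicity, admits no monochromatic solution of the
exponential system `E(R, {C_k(i,j)})`. -/
theorem no_mono_exp_solution_of_no_mono_lin_solution (n : ℕ) (hn : 1 ≤ n)
    (R : Set (Fin n × Fin n)) (C : Fin n → Fin n → Fin n → ℤ)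
    (hC : ∀ i j, (i, j) ∈ R → ∃ k, C k i j ≠ 0)
    (X : Type) [Finite X] (c : ℕ → X)
    (hc : ¬ ∃ z : Fin n → ℕ, (∀ i, 0 < z i) ∧ (∃ col : X, ∀ i, c (z i) = col) ∧
      ∃ κ : Fin n → ℤ, ∀ i j, (i, j) ∈ R →
        κ j - κ i = ∑ m, C m i j * (z m : ℤ))
    (f : ℕ → X)
    (hf : ∀ x, 2 ≤ x → f x = c (ArithmeticFunction.cardFactors x)) :
    ¬ ∃ x y : Fin n → ℕ, (∀ i, 1 < x i) ∧ (∀ i, 1 < y i) ∧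
      (∃ col : X, (∀ i, f (x i) = col) ∧ (∀ i, f (y i) = col)) ∧
      ∀ i j, (i, j) ∈ R →
        (x i : ℝ) ^ (∏ k, (y k : ℝ) ^ (C k i j)) = (x j : ℝ) :=
  no_mono_exp_solution_of_no_mono_lin_solution_general n R C X c hc f hf
end

section
/- There exists a finite colouring f : ℕ → X (X finite) such that there are no natural numbers x, y, z, all > 1, with f(x) = f(y) = f(z) and x^{y^2} = x^z. -/
/-!
Colour `n` by the parity of `⌊log₂ ⌊log₂ n⌋⌋`. For `x > 1` the equation forces `z = y ^ 2`, and
squaring `y ≥ 2` raises `⌊log₂ ⌊log₂ y⌋⌋` by exactly one, so `y` and `z` get different colours.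
-/

theorem Nat.log_pow_div {n : ℕ} (hn : 0 < n) (b y : ℕ) : Nat.log b (y ^ n) / n = Nat.log b y := by
  rcases le_or_gt b 1 with hb | hb
  · simp [Nat.log_of_left_le_one hb]
  rcases Nat.eq_zero_or_pos y with rfl | hy
  · simp [zero_pow hn.ne']
  apply Nat.div_eq_of_lt_le
  · refine Nat.le_log_of_pow_le hb ?_
    rw [pow_mul]
    exact Nat.pow_le_pow_left (Nat.pow_log_le_self b hy.ne') n
  · refine Nat.log_lt_of_lt_pow (by positivity) ?_
    rw [pow_mul]
    exact Nat.pow_lt_pow_left (Nat.lt_pow_succ_log_self hb y) hn.ne'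

theorem Nat.log_log_pow_self {b y : ℕ} (hb : 1 < b) (hy : b ≤ y) :
    Nat.log b (Nat.log b (y ^ b)) = Nat.log b (Nat.log b y) + 1 := by
  have hdiv := Nat.log_pow_div (by omega : 0 < b) b y
  have hm : b ≤ Nat.log b (y ^ b) := by
    have hpos := Nat.log_pos hb hy
    rw [← hdiv] at hpos
    exact (Nat.one_le_div_iff (by omega)).mp hpos
  rw [← hdiv, Nat.log_div_base]
  have hm_pos := Nat.log_pos hb hm
  omega

/-- There is a finite colouring of `ℕ` with no monochromatic `x, y, z > 1` satisfying
`x ^ (y ^ 2) = x ^ z`. -/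
theorem exists_colouring_no_mono_x_pow_ysq_eq_x_pow_z :
    ∃ (X : Type) (_ : Finite X) (f : ℕ → X),
      ¬ ∃ x y z : ℕ, 1 < x ∧ 1 < y ∧ 1 < z ∧
        f x = f y ∧ f x = f z ∧ x ^ (y ^ 2) = x ^ z := by
  refine ⟨ZMod 2, inferInstance, fun n => (Nat.log 2 (Nat.log 2 n) : ZMod 2), ?_⟩
  rintro ⟨x, y, z, hx, hy, -, hxy, hxz, heq⟩
  obtain rfl : z = y ^ 2 := (Nat.pow_right_injective hx heq).symm
  have hsucc : (Nat.log 2 (Nat.log 2 (y ^ 2)) : ZMod 2) = Nat.log 2 (Nat.log 2 y) + 1 := by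
    rw [Nat.log_log_pow_self one_lt_two hy, Nat.cast_succ]
  have hcontra := hxy.symm.trans (hxz.trans hsucc)
  simp at hcontra
end

section
/- For every finite colouring f : ℕ → X there exist natural numbers a, b, both > 1, such that f(a) = f(b) = f(a^b). -/
/-!
We prove that every finite colouring of ℕ admits `a, b > 1` with
`f a = f b = f (a ^ b)` (monochromatic "exponential triples").

Strategy (ultrafilter proof): work with the exponent colouring `H n = f (2 ^ n)`
on `M := ℕ+`.  The set `E` of ultrafilters on `M` all of whose members are
additively IP is a nonempty closed left ideal for the ultrafilter
*multiplication* on `M`.  Take a minimal closed left ideal `L ⊆ E`, some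
`V ∈ L`, and the colour class `C ∈ V`.  Then `C` contains an additive FS-set,
and by minimality of `L` plus compactness there is a finite set `T` with
`∀ q ∈ L, ∃ t ∈ T, t⁻¹C ∈ q`.  Applying this to `q_j = pure (2 ^ p_j) * V`
for prefix sums `p_j` of the FS-generator and pigeonholing on `T` produces
`x, w, x * 2 ^ w ∈ C` with `w` a finite sum lying in `C` as well.  Then
`a = 2 ^ x`, `b = 2 ^ w` works, since `a ^ b = 2 ^ (x * 2 ^ w)`.
-/

open Filter Hindman Set

attribute [local instance] Ultrafilter.mul Ultrafilter.add
attribute [local instance] Ultrafilter.semigroup Ultrafilter.addSemigroup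

namespace ExpTriple

abbrev M := ℕ+

theorem mem_umul {U V : Ultrafilter M} {s : Set M} :
    s ∈ U * V ↔ {m : M | {m' : M | m * m' ∈ s} ∈ V} ∈ U :=
  Ultrafilter.eventually_mul U V (· ∈ s)

theorem mem_pure_umul {x : M} {V : Ultrafilter M} {s : Set M} :
    s ∈ (pure x : Ultrafilter M) * V ↔ {m' : M | x * m' ∈ s} ∈ V := by
  rw [mem_umul]; simp

theorem pure_mul_pure_mul (y x : M) (q : Ultrafilter M) :
    (pure y : Ultrafilter M) * ((pure x : Ultrafilter M) * q)
      = (pure (y * x) : Ultrafilter M) * q := by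
  rw [← mul_assoc]
  congr 1

theorem continuous_pure_mul (x : M) :
    Continuous (fun V : Ultrafilter M => (pure x : Ultrafilter M) * V) := by
  refine ultrafilterBasis_is_basis.continuous_iff.2 <| Set.forall_mem_range.mpr fun s => ?_
  convert ultrafilter_isOpen_basic {m' : M | x * m' ∈ s} using 1
  ext V; exact mem_pure_umul

/-- additively IP set in `ℕ+` -/
def IsIP (A : Set M) : Prop := ∃ g : Stream' M, FS g ⊆ A

theorem FS_map_subset {x : M} {g : Stream' M} {m : M}
    (hm : m ∈ FS (g.map (fun y => x * y))) : ∃ m' ∈ FS g, m = x * m' := by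
  generalize hgen : g.map (fun y => x * y) = a at hm
  induction hm generalizing g with
  | head' a =>
      exact ⟨g.head, FS.head g, by rw [← hgen, Stream'.head_map]⟩
  | tail' a m h ih =>
      obtain ⟨m', hm', rfl⟩ := ih (g := g.tail) (by rw [← hgen, Stream'.map_tail])
      exact ⟨m', FS.tail g m' hm', rfl⟩
  | cons' a m h ih =>
      obtain ⟨m', hm', rfl⟩ := ih (g := g.tail) (by rw [← hgen, Stream'.map_tail])
      refine ⟨g.head + m', FS.cons g m' hm', ?_⟩
      rw [← hgen, Stream'.head_map, mul_add]

/-- the set of ultrafilters all of whose members are additively IP -/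
def E : Set (Ultrafilter M) := {U | ∀ A ∈ U, IsIP A}

theorem isClosed_E : IsClosed E := by
  have h : E = ⋂ (A : Set M) (_ : ¬ IsIP A), {U : Ultrafilter M | A ∈ U}ᶜ := by
    ext U
    simp only [Set.mem_iInter, Set.mem_compl_iff, Set.mem_setOf_eq, E]
    constructor
    · intro h A hA hAU; exact hA (h A hAU)
    · intro h A hAU; by_contra hA; exact h A hA hAU
  rw [h]
  exact isClosed_iInter fun A => isClosed_iInter fun _ =>
    (ultrafilter_isOpen_basic A).isClosed_compl

theorem E_nonempty : E.Nonempty := by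
  obtain ⟨U, hidem, -⟩ :=
    Hindman.exists_idempotent_ultrafilter_le_FS (Stream'.const (1 : M))
  exact ⟨U, fun A hA => Hindman.exists_FS_of_large U hidem A hA⟩

theorem E_mul_mem {W U : Ultrafilter M} (hU : U ∈ E) : W * U ∈ E := by
  intro A hA
  rw [mem_umul] at hA
  obtain ⟨x, hx⟩ := Ultrafilter.nonempty_of_mem hA
  obtain ⟨g, hg⟩ := hU _ hx
  refine ⟨g.map (fun y => x * y), fun m hm => ?_⟩
  obtain ⟨m', hm', rfl⟩ := FS_map_subset hm
  exact hg hm'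

/-- closed left ideals contained in `E` -/
def LeftIdealIn (L : Set (Ultrafilter M)) : Prop :=
  L.Nonempty ∧ IsClosed L ∧ L ⊆ E ∧ ∀ (W : Ultrafilter M), ∀ V ∈ L, W * V ∈ L

theorem E_leftIdeal : LeftIdealIn E :=
  ⟨E_nonempty, isClosed_E, Subset.rfl, fun _ _ hV => E_mul_mem hV⟩

theorem exists_minimal_leftIdeal : ∃ L, Minimal LeftIdealIn L := by
  have H : ∀ c ⊆ setOf LeftIdealIn, IsChain (· ⊆ ·) c → c.Nonempty →
      ∃ lb ∈ setOf LeftIdealIn, ∀ s ∈ c, lb ⊆ s := by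
    intro c hcS hchain hcne
    refine ⟨⋂₀ c, ⟨?_, ?_, ?_, ?_⟩, fun s hs => sInter_subset_of_mem hs⟩
    · haveI : Nonempty c := hcne.to_subtype
      apply IsCompact.nonempty_sInter_of_directed_nonempty_isCompact_isClosed
      · exact IsChain.directedOn hchain.symm
      · exact fun U hU => (hcS hU).1
      · exact fun U hU => (hcS hU).2.1.isCompact
      · exact fun U hU => (hcS hU).2.1
    · exact isClosed_sInter fun U hU => (hcS hU).2.1
    · obtain ⟨s, hs⟩ := hcne
      exact (sInter_subset_of_mem hs).trans (hcS hs).2.2.1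
    · intro W V hV
      exact mem_sInter.mpr fun s hs => (hcS hs).2.2.2 W V (mem_sInter.mp hV s hs)
  obtain ⟨L, -, hL⟩ := zorn_superset_nonempty (setOf LeftIdealIn) H E E_leftIdeal
  exact ⟨L, hL⟩

def orbit (q : Ultrafilter M) : Set (Ultrafilter M) :=
  Set.range (fun x : M => (pure x : Ultrafilter M) * q)

theorem mem_orbit (x : M) (q : Ultrafilter M) : (pure x : Ultrafilter M) * q ∈ orbit q :=
  ⟨x, rfl⟩

theorem hits {L : Set (Ultrafilter M)} (hL : Minimal LeftIdealIn L)
    {V : Ultrafilter M} (hV : V ∈ L) (C : Set M) (hC : C ∈ V) :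
    ∀ q ∈ L, ∃ x : M, {y : M | x * y ∈ C} ∈ q := by
  intro q hq
  have hSL : orbit q ⊆ L := by
    rintro _ ⟨x, rfl⟩
    exact hL.prop.2.2.2 _ q hq
  have hLq : LeftIdealIn (closure (orbit q)) := by
    refine ⟨⟨(pure 1 : Ultrafilter M) * q, subset_closure (mem_orbit 1 q)⟩,
      isClosed_closure, ?_, ?_⟩
    · exact ((IsClosed.closure_subset_iff hL.prop.2.1).mpr hSL).trans hL.prop.2.2.1
    · intro W V' hV'
      have step1 : ∀ y : M, (pure y : Ultrafilter M) * V' ∈ closure (orbit q) := fun y =>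
        map_mem_closure (continuous_pure_mul y) hV' (by
          rintro _ ⟨x, rfl⟩
          exact ⟨y * x, (pure_mul_pure_mul y x q).symm⟩)
      have h2 : W * V' ∈ closure (closure (orbit q)) :=
        map_mem_closure (f := (· * V')) (Ultrafilter.continuous_mul_left V')
          (denseRange_pure W) (by
          rintro _ ⟨y, rfl⟩
          exact step1 y)
      rwa [closure_closure] at h2
  have hLqL : closure (orbit q) ⊆ L := (IsClosed.closure_subset_iff hL.prop.2.1).mpr hSL
  have hsub : L ⊆ closure (orbit q) := hL.2 hLq hLqL
  have hVc : V ∈ closure (orbit q) := hsub hV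
  rw [mem_closure_iff] at hVc
  obtain ⟨U, hUmem, hUS⟩ :=
    hVc {W : Ultrafilter M | C ∈ W} (ultrafilter_isOpen_basic C) hC
  obtain ⟨x, rfl⟩ := hUS
  exact ⟨x, mem_pure_umul.mp hUmem⟩

variable (g : Stream' M)

/-- sum of `g.get i, ..., g.get (i+len)` -/
def bsum : ℕ → ℕ → M
  | i, 0 => g.get i
  | i, (len+1) => g.get i + bsum (i+1) len

theorem bsum_mem_FS (i len : ℕ) : bsum g i len ∈ FS (g.drop i) := by
  induction len generalizing i with
  | zero =>
      show g.get i ∈ _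
      rw [← Stream'.head_drop]
      exact FS.head _
  | succ len ih =>
      show g.get i + bsum g (i+1) len ∈ _
      have h := ih (i+1)
      rw [← Stream'.tail_drop'] at h
      have h2 := FS.cons (g.drop i) _ h
      rwa [Stream'.head_drop] at h2

theorem bsum_mem_FS' (i len : ℕ) : bsum g i len ∈ FS g :=
  FS_iter_tail_sub_FS g i (bsum_mem_FS g i len)

theorem bsum_split (i len₁ len₂ : ℕ) :
    bsum g i (len₁ + len₂ + 1) = bsum g i len₁ + bsum g (i + len₁ + 1) len₂ := by
  induction len₁ generalizing i with
  | zero =>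
      rw [Nat.zero_add, Nat.add_zero]
      rfl
  | succ len₁ ih =>
      have h1 : len₁ + 1 + len₂ + 1 = (len₁ + len₂ + 1) + 1 := by omega
      rw [h1]
      show g.get i + bsum g (i+1) (len₁ + len₂ + 1)
          = bsum g i (len₁+1) + bsum g (i + (len₁ + 1) + 1) len₂
      rw [ih (i+1)]
      have h2 : i + 1 + len₁ + 1 = i + (len₁ + 1) + 1 := by omega
      rw [h2, ← add_assoc]
      rfl

/-- The key combinatorial result: any finite colouring of `ℕ+` admits a
monochromatic triple `x`, `w`, `x * 2 ^ w`. -/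
theorem exists_triple {X : Type} [Finite X] (H : M → X) :
    ∃ x w : M, H x = H w ∧ H x = H (x * (2 : M) ^ (w : ℕ)) := by
  classical
  obtain ⟨L, hL⟩ := exists_minimal_leftIdeal
  obtain ⟨V, hV⟩ := hL.prop.1
  -- the colour class of V
  have hclass : ∃ c : X, {n : M | H n = c} ∈ V := by
    by_contra hcon
    push_neg at hcon
    haveI := Fintype.ofFinite X
    have hco : ∀ c : X, {n : M | H n ≠ c} ∈ V := fun c => by
      have := hcon c
      rwa [Ultrafilter.compl_mem_iff_notMem.symm] at this
    have hint : (⋂ c : X, {n : M | H n ≠ c}) ∈ V := by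
      rw [← Ultrafilter.mem_coe]
      exact Filter.iInter_mem.mpr fun c => hco c
    obtain ⟨n, hn⟩ := Ultrafilter.nonempty_of_mem hint
    exact (Set.mem_iInter.mp hn (H n)) rfl
  obtain ⟨c, hC⟩ := hclass
  set C : Set M := {n : M | H n = c} with hCdef
  -- C is additively IP
  obtain ⟨g, hg⟩ := (hL.prop.2.2.1 hV) C hC
  -- compactness: a finite T such that every q ∈ L contains t⁻¹C for some t ∈ T
  have hcover : L ⊆ ⋃ x : M, {q : Ultrafilter M | {y : M | x * y ∈ C} ∈ q} := by
    intro q hq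
    obtain ⟨x, hx⟩ := hits hL hV C hC q hq
    exact Set.mem_iUnion.mpr ⟨x, hx⟩
  obtain ⟨T, hT⟩ := (hL.prop.2.1.isCompact).elim_finite_subcover
    (fun x : M => {q : Ultrafilter M | {y : M | x * y ∈ C} ∈ q})
    (fun x => ultrafilter_isOpen_basic _) hcover
  -- prefix sums of g and powers of two
  set p : ℕ → M := fun n => bsum g 0 n with hp
  set e : ℕ → M := fun n => (2 : M) ^ ((p n : ℕ)) with he
  -- multi-hit
  have hqj : ∀ j : Fin (T.card + 1), ∃ t ∈ T,
      {z : M | t * (e (j : ℕ) * z) ∈ C} ∈ V := by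
    intro j
    have hmem : (pure (e (j : ℕ)) : Ultrafilter M) * V ∈ L :=
      hL.prop.2.2.2 _ V hV
    have := hT hmem
    rw [Set.mem_iUnion₂] at this
    obtain ⟨t, htT, hq⟩ := this
    rw [Set.mem_setOf_eq, mem_pure_umul] at hq
    exact ⟨t, htT, hq⟩
  choose t htT htC using hqj
  -- a common z
  have hint : (⋂ j : Fin (T.card + 1), {z : M | t j * (e (j : ℕ) * z) ∈ C}) ∈ V := by
    rw [← Ultrafilter.mem_coe]
    exact Filter.iInter_mem.mpr fun j => htC j
  obtain ⟨z, hz⟩ := Ultrafilter.nonempty_of_mem hint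
  have hzj : ∀ j : Fin (T.card + 1), t j * (e (j : ℕ) * z) ∈ C :=
    fun j => Set.mem_iInter.mp hz j
  -- pigeonhole on T
  have hcard : Fintype.card {x // x ∈ T} < Fintype.card (Fin (T.card + 1)) := by
    rw [Fintype.card_coe, Fintype.card_fin]
    omega
  obtain ⟨j₁, j₂, hjne, hjeq⟩ :=
    Fintype.exists_ne_map_eq_of_card_lt
      (fun j : Fin (T.card + 1) => (⟨t j, htT j⟩ : {x // x ∈ T})) hcard
  have hteq : t j₁ = t j₂ := by
    simpa using hjeq
  -- a finishing move, for any pair a < b with the same t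
  have final : ∀ a b : Fin (T.card + 1), (a : ℕ) < (b : ℕ) → t a = t b →
      ∃ x w : M, H x = H w ∧ H x = H (x * (2 : M) ^ (w : ℕ)) := by
    intro a b hab hte
    set d := (b : ℕ) - (a : ℕ) - 1 with hd
    have hb : (b : ℕ) = (a : ℕ) + d + 1 := by omega
    set w : M := bsum g ((a : ℕ) + 1) d with hwdef
    have hw : p (b : ℕ) = p (a : ℕ) + w := by
      rw [hp]
      simp only
      rw [hb, bsum_split g 0 (a : ℕ) d, Nat.zero_add]
    have hwC : w ∈ C := hg (bsum_mem_FS' g _ _)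
    have hx₀ : t a * (e (a : ℕ) * z) ∈ C := hzj a
    have hx₁ : t a * (e (b : ℕ) * z) ∈ C := by
      rw [hte]; exact hzj b
    have hee : e (b : ℕ) = e (a : ℕ) * (2 : M) ^ ((w : ℕ)) := by
      rw [he]
      simp only
      rw [hw, PNat.add_coe, pow_add]
    have key : t a * (e (b : ℕ) * z) = (t a * (e (a : ℕ) * z)) * (2 : M) ^ (w : ℕ) := by
      rw [hee, mul_right_comm (e (a : ℕ)) ((2 : M) ^ (w : ℕ)) z, ← mul_assoc, mul_assoc]
    refine ⟨t a * (e (a : ℕ) * z), w, ?_, ?_⟩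
    · have h1 : H (t a * (e (a : ℕ) * z)) = c := hx₀
      have h2 : H w = c := hwC
      rw [h1, h2]
    · have h1 : H (t a * (e (a : ℕ) * z)) = c := hx₀
      have h2 : H (t a * (e (b : ℕ) * z)) = c := hx₁
      rw [key] at h2
      rw [h1, h2]
  rcases hjne.lt_or_gt with hlt | hlt
  · exact final j₁ j₂ (by exact_mod_cast hlt) hteq
  · exact final j₂ j₁ (by exact_mod_cast hlt) hteq.symm

end ExpTriple

/-- Every finite colouring of `ℕ` admits `a, b > 1` with `a`, `b` and `a ^ b`
all of the same colour. -/
theorem mono_a_b_a_pow_b (X : Type) [Finite X] (f : ℕ → X) :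
    ∃ a b : ℕ, 1 < a ∧ 1 < b ∧ f a = f b ∧ f a = f (a ^ b) := by
  obtain ⟨x, w, h1, h2⟩ := ExpTriple.exists_triple (X := X) (fun n : ℕ+ => f (2 ^ (n : ℕ)))
  refine ⟨2 ^ (x : ℕ), 2 ^ (w : ℕ), ?_, ?_, ?_, ?_⟩
  · exact Nat.one_lt_two_pow_iff.mpr x.pos.ne'
  · exact Nat.one_lt_two_pow_iff.mpr w.pos.ne'
  · exact h1
  · have hcoe : ((x * (2 : ℕ+) ^ (w : ℕ) : ℕ+) : ℕ) = (x : ℕ) * 2 ^ (w : ℕ) := by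
      push_cast
      ring
    rw [hcoe, pow_mul] at h2
    exact h2
end
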